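/- arXiv:0812.4154 — 2 statements merged into one kernel-verified Lean document; each statement's English description precedes it below -/
import Mathlib

section
/- Let m be odd, let P be a regular T-anti-palindromic matrix polynomial of degree m with n×n coefficients, let λ ∈ ℂ with λ ≠ 1, and let x ∈ ℂⁿ with ‖x‖₂ = 1; set r := −P(λ)x. Then the Frobenius-norm structured backward error over the class S_ap of T-anti-palindromic polynomials of degree m satisfies η_F^{S_ap}(λ, x, P) = [ (2/‖Λ_m‖₂²)·‖r‖₂² + ( 1/‖Π₋(Λ_m)‖₂² − 2/‖Λ_m‖₂² )·|xᵀr|² ]^{1/2}. -/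
/-!
Put `p j = Δ j *ᵥ x` and `d j = xᵀ p j`. Anti-palindromy gives `(Δ j)ᵀ x = -p (m - j)`, hence
`d (m - j) = -d j`. For one matrix, the least squared Frobenius norm with `Δ x = p`, `Δᵀ x = q`
(where `xᵀ p = xᵀ q`) is `‖p‖² + ‖q‖² - |xᵀ p|²`, attained by a matrix of rank two, so the squared
backward error is the least value of `2 ∑ ‖p j‖² - ∑ |d j|²` over families with `∑ λ^j p j = r`
and antisymmetric `d`. Splitting each `p j` into its component `d j • x̄` and the rest separates
the constraint into `∑ λ^j d j = xᵀ r` and a vector equation for the rest. Cauchy–Schwarz on each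
part (with weights `λ^j`, resp. `(λ^j - λ^(m-j)) / 2` since `d` is antisymmetric) gives the
bound, and the equality cases give the minimiser.
-/

noncomputable section

/-- Euclidean (ℓ²) norm of a complex vector. -/
def vnorm {α : Type*} [Fintype α] (x : α → ℂ) : ℝ :=
  Real.sqrt (∑ i, ‖x i‖ ^ 2)

/-- Frobenius norm of a complex matrix. -/
def frobNorm {α : Type*} [Fintype α] (A : Matrix α α ℂ) : ℝ :=
  Real.sqrt (∑ i, ∑ j, ‖A i j‖ ^ 2)

/-- Spectral (operator 2-)norm of a complex matrix. -/
def specNorm {α : Type*} [Fintype α] [DecidableEq α] (A : Matrix α α ℂ) : ℝ :=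
  ‖Matrix.toEuclideanCLM (𝕜 := ℂ) A‖

/-- Evaluation of the matrix polynomial `P(z) = ∑_{j=0}^m z^j A_j`. -/
def evalP {n : ℕ} (m : ℕ) (A : ℕ → Matrix (Fin n) (Fin n) ℂ) (z : ℂ) :
    Matrix (Fin n) (Fin n) ℂ :=
  ∑ j ∈ Finset.range (m + 1), z ^ j • A j

/-- `‖Λ_m‖₂² = ∑_{j=0}^m |λ|^{2j}` where `Λ_m = (1, λ, …, λ^m)ᵀ`. -/
def LamNormSq (m : ℕ) (lam : ℂ) : ℝ :=
  ∑ j ∈ Finset.range (m + 1), ‖lam‖ ^ (2 * j)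

/-- `‖Π₊(Λ_m)‖₂²`. -/
def PiPlusSq (m : ℕ) (lam : ℂ) : ℝ :=
  if m % 2 = 1 then
    ∑ j ∈ Finset.range ((m + 1) / 2), ‖lam ^ j + lam ^ (m - j)‖ ^ 2 / 2
  else
    (∑ j ∈ Finset.range (m / 2), ‖lam ^ j + lam ^ (m - j)‖ ^ 2 / 2) + ‖lam ^ (m / 2)‖ ^ 2

/-- `‖Π₋(Λ_m)‖₂²`. -/
def PiMinusSq (m : ℕ) (lam : ℂ) : ℝ :=
  if m % 2 = 1 then
    ∑ j ∈ Finset.range ((m + 1) / 2), ‖lam ^ j - lam ^ (m - j)‖ ^ 2 / 2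
  else
    ∑ j ∈ Finset.range (m / 2), ‖lam ^ j - lam ^ (m - j)‖ ^ 2 / 2

/-- Frobenius-norm structured backward error over T-anti-palindromic polynomials of degree `m`. -/
def etaF_Tapal {n : ℕ} (m : ℕ) (A : ℕ → Matrix (Fin n) (Fin n) ℂ) (lam : ℂ)
    (x : Fin n → ℂ) : ℝ :=
  sInf { e : ℝ | ∃ Δ : ℕ → Matrix (Fin n) (Fin n) ℂ,
    (∀ j ≤ m, Δ (m - j) = -(Δ j).transpose) ∧
    (evalP m A lam).mulVec x + (evalP m Δ lam).mulVec x = 0 ∧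
    e = Real.sqrt (∑ j ∈ Finset.range (m + 1), frobNorm (Δ j) ^ 2) }

open Finset Matrix Complex ComplexConjugate

section Vectors

variable {ι : Type*} [Fintype ι]

def vnormSq (v : ι → ℂ) : ℝ := ∑ i, normSq (v i)

lemma vnorm_sq (v : ι → ℂ) : vnorm v ^ 2 = vnormSq v := by
  rw [vnorm, Real.sq_sqrt (by positivity)]
  simp only [vnormSq, Complex.sq_norm]

lemma vnormSq_smul (c : ℂ) (v : ι → ℂ) : vnormSq (c • v) = normSq c * vnormSq v := by
  simp [vnormSq, mul_sum]

lemma vnormSq_neg (v : ι → ℂ) : vnormSq (-v) = vnormSq v := by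
  simp [vnormSq]

lemma vnormSq_star (v : ι → ℂ) : vnormSq (star v) = vnormSq v := by
  simp [vnormSq]

lemma dotProduct_star_self (v : ι → ℂ) : v ⬝ᵥ star v = vnormSq v := by
  simp [dotProduct, vnormSq, Complex.mul_conj]

lemma vnormSq_add_of_dotProduct_star_eq_zero {v w : ι → ℂ} (h : v ⬝ᵥ star w = 0) :
    vnormSq (v + w) = vnormSq v + vnormSq w := by
  have hre : ∑ i, (v i * conj (w i)).re = 0 := by
    rw [← re_sum]
    simpa [dotProduct, Complex.star_def] using congrArg re h
  simp only [vnormSq, Pi.add_apply, normSq_add, sum_add_distrib, ← mul_sum, hre, mul_zero,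
    add_zero]

lemma normSq_sum_mul_le {κ : Type*} (s : Finset κ) (c d : κ → ℂ) :
    normSq (∑ t ∈ s, c t * d t) ≤ (∑ t ∈ s, normSq (c t)) * ∑ t ∈ s, normSq (d t) := by
  simp only [← Complex.sq_norm]
  calc ‖∑ t ∈ s, c t * d t‖ ^ 2 ≤ (∑ t ∈ s, ‖c t‖ * ‖d t‖) ^ 2 := by
        gcongr
        exact (norm_sum_le _ _).trans_eq (by simp only [norm_mul])
    _ ≤ _ := sum_mul_sq_le_sq_mul_sq s _ _

lemma vnormSq_sum_smul_le {κ : Type*} (s : Finset κ) (c : κ → ℂ) (v : κ → ι → ℂ) :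
    vnormSq (∑ t ∈ s, c t • v t) ≤ (∑ t ∈ s, normSq (c t)) * ∑ t ∈ s, vnormSq (v t) := by
  unfold vnormSq
  rw [sum_comm, mul_sum]
  refine sum_le_sum fun i _ => ?_
  simpa [Finset.sum_apply] using normSq_sum_mul_le s c (fun t => v t i)

variable {x : ι → ℂ}

lemma vnormSq_add_smul_star (hx : vnormSq x = 1) {w : ι → ℂ} (hw : x ⬝ᵥ w = 0) (c : ℂ) :
    vnormSq (w + c • star x) = vnormSq w + normSq c := by
  have horth : w ⬝ᵥ star (c • star x) = 0 := by
    rw [star_smul, star_star, dotProduct_smul, dotProduct_comm, hw, smul_zero]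
  rw [vnormSq_add_of_dotProduct_star_eq_zero horth, vnormSq_smul, vnormSq_star, hx, mul_one]

lemma dotProduct_sub_proj (hx : vnormSq x = 1) (v : ι → ℂ) :
    x ⬝ᵥ (v - (x ⬝ᵥ v) • star x) = 0 := by
  rw [dotProduct_sub, dotProduct_smul, dotProduct_star_self, hx]
  simp

lemma vnormSq_eq_sub_proj_add (hx : vnormSq x = 1) (v : ι → ℂ) :
    vnormSq v = vnormSq (v - (x ⬝ᵥ v) • star x) + normSq (x ⬝ᵥ v) := by
  conv_lhs => rw [← sub_add_cancel v ((x ⬝ᵥ v) • star x)]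
  exact vnormSq_add_smul_star hx (dotProduct_sub_proj hx v) _

end Vectors

section Matrices

variable {ι : Type*} [Fintype ι]

def frobNormSq (A : Matrix ι ι ℂ) : ℝ := ∑ i, vnormSq (A i)

lemma frobNorm_sq (A : Matrix ι ι ℂ) : frobNorm A ^ 2 = frobNormSq A := by
  rw [frobNorm, Real.sq_sqrt (by positivity)]
  simp only [frobNormSq, vnormSq, Complex.sq_norm]

lemma frobNormSq_transpose (A : Matrix ι ι ℂ) : frobNormSq Aᵀ = frobNormSq A := by
  simp only [frobNormSq, vnormSq, transpose_apply]
  exact sum_comm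

lemma frobNormSq_vecMulVec (a b : ι → ℂ) : frobNormSq (vecMulVec a b) = vnormSq a * vnormSq b := by
  simp only [frobNormSq, vnormSq, vecMulVec_apply, normSq_mul, sum_mul, mul_sum]
  exact sum_comm

lemma vnormSq_mulVec_le (A : Matrix ι ι ℂ) (x : ι → ℂ) :
    vnormSq (A *ᵥ x) ≤ frobNormSq A * vnormSq x := by
  rw [frobNormSq, sum_mul]
  exact sum_le_sum fun i _ => normSq_sum_mul_le univ (A i) x

variable {x : ι → ℂ}

lemma star_dotProduct_self (hx : vnormSq x = 1) : star x ⬝ᵥ x = 1 := by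
  rw [dotProduct_comm, dotProduct_star_self, hx, ofReal_one]

lemma frobNormSq_eq_add_sub_vecMulVec (hx : vnormSq x = 1) (A : Matrix ι ι ℂ) :
    frobNormSq A = vnormSq (A *ᵥ x) + frobNormSq (A - vecMulVec (A *ᵥ x) (star x)) := by
  have hrow : ∀ i, (A - vecMulVec (A *ᵥ x) (star x)) i = A i - (x ⬝ᵥ A i) • star x := by
    intro i
    ext l
    simp [vecMulVec_apply, mulVec, dotProduct_comm]
  simp only [frobNormSq, hrow]
  rw [vnormSq, ← sum_add_distrib]
  refine sum_congr rfl fun i _ => ?_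
  rw [vnormSq_eq_sub_proj_add hx (A i), add_comm, mulVec, dotProduct_comm]

lemma vnormSq_mulVec_add_transpose_sub_le_frobNormSq (hx : vnormSq x = 1) (A : Matrix ι ι ℂ) :
    vnormSq (A *ᵥ x) + vnormSq (Aᵀ *ᵥ x) - normSq (x ⬝ᵥ A *ᵥ x) ≤ frobNormSq A := by
  set W := A - vecMulVec (A *ᵥ x) (star x)
  have hW : Wᵀ *ᵥ x = Aᵀ *ᵥ x - (x ⬝ᵥ Aᵀ *ᵥ x) • star x := by
    simp [W, transpose_sub, transpose_vecMulVec, sub_mulVec, vecMulVec_mulVec,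
      dotProduct_transpose_mulVec, dotProduct_comm (A *ᵥ x)]
  have hWx := vnormSq_mulVec_le Wᵀ x
  rw [hW, frobNormSq_transpose, hx, mul_one] at hWx
  have hsplit := vnormSq_eq_sub_proj_add hx (Aᵀ *ᵥ x)
  rw [dotProduct_transpose_mulVec] at hsplit hWx
  rw [frobNormSq_eq_add_sub_vecMulVec hx A]
  linarith

def minFrobInterp (x p q : ι → ℂ) : Matrix ι ι ℂ :=
  vecMulVec p (star x) + vecMulVec (star x) q - (x ⬝ᵥ p) • vecMulVec (star x) (star x)

lemma minFrobInterp_neg (x p q : ι → ℂ) :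
    minFrobInterp x (-p) (-q) = -minFrobInterp x p q := by
  simp only [minFrobInterp, neg_vecMulVec, vecMulVec_neg, dotProduct_neg, neg_smul]
  abel

variable {p q : ι → ℂ}

lemma minFrobInterp_transpose (hpq : x ⬝ᵥ q = x ⬝ᵥ p) :
    (minFrobInterp x p q)ᵀ = minFrobInterp x q p := by
  simp only [minFrobInterp, transpose_sub, transpose_add, transpose_smul, transpose_vecMulVec, hpq]
  abel

lemma minFrobInterp_mulVec (hx : vnormSq x = 1) (hpq : x ⬝ᵥ q = x ⬝ᵥ p) :
    minFrobInterp x p q *ᵥ x = p := by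
  simp [minFrobInterp, sub_mulVec, add_mulVec, smul_mulVec, vecMulVec_mulVec,
    star_dotProduct_self hx, dotProduct_comm q, hpq]

lemma frobNormSq_minFrobInterp (hx : vnormSq x = 1) (hpq : x ⬝ᵥ q = x ⬝ᵥ p) :
    frobNormSq (minFrobInterp x p q) = vnormSq p + vnormSq q - normSq (x ⬝ᵥ p) := by
  have hrest : minFrobInterp x p q - vecMulVec p (star x)
      = vecMulVec (star x) (q - (x ⬝ᵥ q) • star x) := by
    rw [vecMulVec_sub, vecMulVec_smul, minFrobInterp, hpq]
    abel
  rw [frobNormSq_eq_add_sub_vecMulVec hx, minFrobInterp_mulVec hx hpq, hrest,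
    frobNormSq_vecMulVec, vnormSq_star, hx, one_mul, vnormSq_eq_sub_proj_add hx q, hpq]
  ring

end Matrices

section Coefficients

variable {m : ℕ}

lemma sum_range_succ_reflect {M : Type*} [AddCommMonoid M] (f : ℕ → M) (m : ℕ) :
    ∑ j ∈ range (m + 1), f (m - j) = ∑ j ∈ range (m + 1), f j := by
  simpa using sum_range_reflect f (m + 1)

lemma two_mul_sum_mul_of_antisymm {c d : ℕ → ℂ} (hd : ∀ j ≤ m, d (m - j) = -d j) :
    2 * ∑ j ∈ range (m + 1), c j * d j = ∑ j ∈ range (m + 1), (c j - c (m - j)) * d j := by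
  have hrefl : ∑ j ∈ range (m + 1), c (m - j) * d j = -∑ j ∈ range (m + 1), c j * d j := by
    rw [← sum_range_succ_reflect, ← sum_neg_distrib]
    refine sum_congr rfl fun j hj => ?_
    have hjm : j ≤ m := Nat.lt_succ_iff.mp (mem_range.mp hj)
    rw [Nat.sub_sub_self hjm, hd j hjm, mul_neg]
  simp only [sub_mul, sum_sub_distrib, hrefl]
  ring

lemma LamNormSq_eq_sum_normSq (lam : ℂ) :
    LamNormSq m lam = ∑ j ∈ range (m + 1), normSq (lam ^ j) := by
  simp only [LamNormSq, pow_mul, Complex.sq_norm, map_pow]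

lemma LamNormSq_pos (lam : ℂ) : 0 < LamNormSq m lam := by
  rw [LamNormSq_eq_sum_normSq]
  exact sum_pos' (fun j _ => normSq_nonneg _) ⟨0, by simp⟩

lemma four_mul_PiMinusSq (hm : Odd m) (lam : ℂ) :
    4 * PiMinusSq m lam = ∑ j ∈ range (m + 1), normSq (lam ^ j - lam ^ (m - j)) := by
  obtain ⟨k, rfl⟩ := hm
  set a : ℕ → ℝ := fun j => normSq (lam ^ j - lam ^ (2 * k + 1 - j))
  have hupper : ∑ j ∈ range (k + 1), a (k + 1 + j) = ∑ j ∈ range (k + 1), a j := by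
    rw [← sum_range_succ_reflect]
    refine sum_congr rfl fun j hj => ?_
    have hjk : j ≤ k := Nat.lt_succ_iff.mp (mem_range.mp hj)
    simp only [a, show k + 1 + (k - j) = 2 * k + 1 - j by omega,
      show 2 * k + 1 - (2 * k + 1 - j) = j by omega]
    rw [← normSq_neg, neg_sub]
  have hmod : (2 * k + 1) % 2 = 1 := by omega
  have hhalf : (2 * k + 1 + 1) / 2 = k + 1 := by omega
  rw [show 2 * k + 1 + 1 = (k + 1) + (k + 1) by ring, sum_range_add, hupper, PiMinusSq,
    if_pos hmod, hhalf, mul_sum, ← sum_add_distrib]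
  refine sum_congr rfl fun j _ => ?_
  rw [Complex.sq_norm]
  ring

lemma PiMinusSq_pos (hm : Odd m) {lam : ℂ} (hlam : lam ≠ 1) : 0 < PiMinusSq m lam := by
  suffices 0 < 4 * PiMinusSq m lam by linarith
  rw [four_mul_PiMinusSq hm]
  refine sum_pos' (fun j _ => normSq_nonneg _) ?_
  obtain ⟨k, rfl⟩ := hm
  by_cases h0 : lam = 0
  · exact ⟨0, by simp, by simp [h0]⟩
  · refine ⟨k, by simp; omega, normSq_pos.mpr ?_⟩
    rw [show 2 * k + 1 - k = k + 1 by omega, pow_succ, ← mul_one_sub]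
    exact mul_ne_zero (pow_ne_zero _ h0) (sub_ne_zero.mpr (Ne.symm hlam))

end Coefficients

section Families

variable {ι : Type*} [Fintype ι] {m : ℕ} {x : ι → ℂ}

def IsTAntiPalindromic (m : ℕ) (Δ : ℕ → Matrix ι ι ℂ) : Prop :=
  ∀ j ≤ m, Δ (m - j) = -(Δ j)ᵀ

/-- For a unit vector `x` and `p` with `xᵀ p (m - j) = -xᵀ p j`, the least value of
`∑ j ≤ m, ‖Δ j‖_F²` over T-anti-palindromic `Δ` with `Δ j *ᵥ x = p j`. -/
def minFrobCost (m : ℕ) (x : ι → ℂ) (p : ℕ → ι → ℂ) : ℝ :=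
  2 * ∑ j ∈ range (m + 1), vnormSq (p j) - ∑ j ∈ range (m + 1), normSq (x ⬝ᵥ p j)

namespace IsTAntiPalindromic

variable {Δ : ℕ → Matrix ι ι ℂ}

lemma dotProduct_mulVec_reflect (hΔ : IsTAntiPalindromic m Δ) {j : ℕ} (hj : j ≤ m) :
    x ⬝ᵥ Δ (m - j) *ᵥ x = -(x ⬝ᵥ Δ j *ᵥ x) := by
  rw [hΔ j hj, neg_mulVec, dotProduct_neg, dotProduct_transpose_mulVec]

lemma minFrobCost_le (hΔ : IsTAntiPalindromic m Δ) (hx : vnormSq x = 1) :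
    minFrobCost m x (fun j => Δ j *ᵥ x) ≤ ∑ j ∈ range (m + 1), frobNormSq (Δ j) := by
  have htranspose : ∑ j ∈ range (m + 1), vnormSq ((Δ j)ᵀ *ᵥ x)
      = ∑ j ∈ range (m + 1), vnormSq (Δ j *ᵥ x) := by
    rw [← sum_range_succ_reflect (fun j => vnormSq (Δ j *ᵥ x))]
    refine sum_congr rfl fun j hj => ?_
    rw [hΔ j (Nat.lt_succ_iff.mp (mem_range.mp hj)), neg_mulVec, vnormSq_neg]
  calc minFrobCost m x (fun j => Δ j *ᵥ x)
      = ∑ j ∈ range (m + 1),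
          (vnormSq (Δ j *ᵥ x) + vnormSq ((Δ j)ᵀ *ᵥ x) - normSq (x ⬝ᵥ Δ j *ᵥ x)) := by
        rw [sum_sub_distrib, sum_add_distrib, htranspose, minFrobCost]
        ring
    _ ≤ _ := sum_le_sum fun j _ => vnormSq_mulVec_add_transpose_sub_le_frobNormSq hx (Δ j)

end IsTAntiPalindromic

def minFrobFamily (m : ℕ) (x : ι → ℂ) (p : ℕ → ι → ℂ) : ℕ → Matrix ι ι ℂ :=
  fun j => minFrobInterp x (p j) (-p (m - j))

variable {p : ℕ → ι → ℂ}

lemma isTAntiPalindromic_minFrobFamily (hp : ∀ j ≤ m, x ⬝ᵥ p (m - j) = -(x ⬝ᵥ p j)) :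
    IsTAntiPalindromic m (minFrobFamily m x p) := by
  intro j hj
  rw [minFrobFamily, minFrobFamily, Nat.sub_sub_self hj,
    minFrobInterp_transpose (by rw [dotProduct_neg, hp j hj, neg_neg]),
    ← minFrobInterp_neg, neg_neg]

lemma minFrobFamily_mulVec (hx : vnormSq x = 1) (hp : ∀ j ≤ m, x ⬝ᵥ p (m - j) = -(x ⬝ᵥ p j))
    {j : ℕ} (hj : j ≤ m) : minFrobFamily m x p j *ᵥ x = p j :=
  minFrobInterp_mulVec hx (by rw [dotProduct_neg, hp j hj, neg_neg])

lemma sum_frobNormSq_minFrobFamily (hx : vnormSq x = 1)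
    (hp : ∀ j ≤ m, x ⬝ᵥ p (m - j) = -(x ⬝ᵥ p j)) :
    ∑ j ∈ range (m + 1), frobNormSq (minFrobFamily m x p j) = minFrobCost m x p := by
  have hterm : ∀ j ∈ range (m + 1), frobNormSq (minFrobFamily m x p j)
      = vnormSq (p j) + vnormSq (p (m - j)) - normSq (x ⬝ᵥ p j) := fun j hj => by
    rw [minFrobFamily, frobNormSq_minFrobInterp hx
      (by rw [dotProduct_neg, hp j (Nat.lt_succ_iff.mp (mem_range.mp hj)), neg_neg]), vnormSq_neg]
  rw [sum_congr rfl hterm, sum_sub_distrib, sum_add_distrib,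
    sum_range_succ_reflect (fun j => vnormSq (p j)), minFrobCost]
  ring

end Families

section Optimum

variable {ι : Type*} [Fintype ι] {m : ℕ} {lam : ℂ} {x r : ι → ℂ}

def backwardErrorSq (m : ℕ) (lam : ℂ) (x r : ι → ℂ) : ℝ :=
  2 / LamNormSq m lam * vnormSq r
    + (1 / PiMinusSq m lam - 2 / LamNormSq m lam) * normSq (x ⬝ᵥ r)

lemma backwardErrorSq_eq (hx : vnormSq x = 1) :
    backwardErrorSq m lam x r = 2 * vnormSq (r - (x ⬝ᵥ r) • star x) / LamNormSq m lam
      + normSq (x ⬝ᵥ r) / PiMinusSq m lam := by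
  rw [backwardErrorSq, vnormSq_eq_sub_proj_add hx r]
  ring

lemma backwardErrorSq_le_minFrobCost (hm : Odd m) (hlam : lam ≠ 1) (hx : vnormSq x = 1)
    {p : ℕ → ι → ℂ} (hp : ∀ j ≤ m, x ⬝ᵥ p (m - j) = -(x ⬝ᵥ p j))
    (hpr : ∑ j ∈ range (m + 1), lam ^ j • p j = r) :
    backwardErrorSq m lam x r ≤ minFrobCost m x p := by
  set d : ℕ → ℂ := fun j => x ⬝ᵥ p j
  set s := x ⬝ᵥ r
  have hs : s = ∑ j ∈ range (m + 1), lam ^ j * d j := by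
    simp only [s, d, ← hpr, dotProduct_sum, dotProduct_smul, smul_eq_mul]
  have hproj : ∑ j ∈ range (m + 1), lam ^ j • (p j - d j • star x) = r - s • star x := by
    simp only [smul_sub, sum_sub_distrib, smul_smul, ← sum_smul, hpr, hs]
  have hvec : vnormSq (r - s • star x)
      ≤ LamNormSq m lam * ∑ j ∈ range (m + 1), vnormSq (p j - d j • star x) := by
    rw [← hproj, LamNormSq_eq_sum_normSq]
    exact vnormSq_sum_smul_le _ _ _
  -- `d` is antisymmetric, so `2 * s = ∑ j, (λ ^ j - λ ^ (m - j)) * d j`.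
  have hscalar : normSq s ≤ PiMinusSq m lam * ∑ j ∈ range (m + 1), normSq (d j) := by
    have hcs := normSq_sum_mul_le (range (m + 1)) (fun j => lam ^ j - lam ^ (m - j)) d
    rw [← two_mul_sum_mul_of_antisymm hp, ← hs, normSq_mul, ← four_mul_PiMinusSq hm] at hcs
    rw [normSq_ofNat] at hcs
    linarith
  have hcost : minFrobCost m x p
      = 2 * ∑ j ∈ range (m + 1), vnormSq (p j - d j • star x)
        + ∑ j ∈ range (m + 1), normSq (d j) := by
    simp only [minFrobCost, vnormSq_eq_sub_proj_add hx (p _), sum_add_distrib]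
    ring
  have hL := LamNormSq_pos (m := m) lam
  have hP := PiMinusSq_pos hm hlam
  rw [backwardErrorSq_eq hx, hcost, mul_div_assoc]
  gcongr
  · exact (div_le_iff₀ hL).mpr (by linarith)
  · exact (div_le_iff₀ hP).mpr (by linarith)

/-- The equality case of both Cauchy–Schwarz inequalities in `backwardErrorSq_le_minFrobCost`. -/
def optimalFamily (m : ℕ) (lam : ℂ) (x r : ι → ℂ) : ℕ → ι → ℂ := fun j =>
  (conj (lam ^ j) / LamNormSq m lam) • (r - (x ⬝ᵥ r) • star x)
    + ((x ⬝ᵥ r) * conj (lam ^ j - lam ^ (m - j)) / (2 * PiMinusSq m lam)) • star x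

lemma dotProduct_optimalFamily (hx : vnormSq x = 1) (j : ℕ) :
    x ⬝ᵥ optimalFamily m lam x r j
      = (x ⬝ᵥ r) * conj (lam ^ j - lam ^ (m - j)) / (2 * PiMinusSq m lam) := by
  rw [optimalFamily, dotProduct_add, dotProduct_smul, dotProduct_sub_proj hx, dotProduct_smul,
    dotProduct_star_self, hx]
  simp

lemma dotProduct_optimalFamily_reflect (hx : vnormSq x = 1) {j : ℕ} (hj : j ≤ m) :
    x ⬝ᵥ optimalFamily m lam x r (m - j) = -(x ⬝ᵥ optimalFamily m lam x r j) := by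
  rw [dotProduct_optimalFamily hx, dotProduct_optimalFamily hx, Nat.sub_sub_self hj,
    ← neg_sub (lam ^ j), map_neg]
  ring

lemma sum_smul_optimalFamily (hm : Odd m) (hlam : lam ≠ 1) :
    ∑ j ∈ range (m + 1), lam ^ j • optimalFamily m lam x r j = r := by
  have hL := (LamNormSq_pos (m := m) lam).ne'
  have hP := (PiMinusSq_pos hm hlam).ne'
  have hu : ∑ j ∈ range (m + 1), lam ^ j * (conj (lam ^ j) / LamNormSq m lam) = 1 := by
    simp only [← mul_div_assoc, mul_conj, ← sum_div, ← ofReal_sum, ← LamNormSq_eq_sum_normSq]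
    exact div_self (ofReal_ne_zero.mpr hL)
  have hantisymm : ∀ j ≤ m, conj (lam ^ (m - j) - lam ^ (m - (m - j)))
      = -conj (lam ^ j - lam ^ (m - j)) := fun j hj => by
    rw [Nat.sub_sub_self hj, ← map_neg, neg_sub]
  have hg : ∑ j ∈ range (m + 1), lam ^ j * ((x ⬝ᵥ r) * conj (lam ^ j - lam ^ (m - j))
      / (2 * PiMinusSq m lam)) = x ⬝ᵥ r := by
    have h2 := two_mul_sum_mul_of_antisymm (c := fun j => lam ^ j)
      (d := fun j => conj (lam ^ j - lam ^ (m - j))) hantisymm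
    simp only [mul_conj, ← ofReal_sum, ← four_mul_PiMinusSq hm] at h2
    calc _ = (x ⬝ᵥ r) / (2 * PiMinusSq m lam)
          * ∑ j ∈ range (m + 1), lam ^ j * conj (lam ^ j - lam ^ (m - j)) := by
          rw [mul_sum]
          exact sum_congr rfl fun j _ => by ring
      _ = x ⬝ᵥ r := by
          push_cast at h2
          rw [show ∑ j ∈ range (m + 1), lam ^ j * conj (lam ^ j - lam ^ (m - j))
            = 2 * PiMinusSq m lam by linear_combination h2 / 2]
          field_simp [ofReal_ne_zero.mpr hP]
  simp only [optimalFamily, smul_add, smul_smul, sum_add_distrib, ← sum_smul, hu, hg, one_smul,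
    sub_add_cancel]

lemma minFrobCost_optimalFamily (hm : Odd m) (hlam : lam ≠ 1) (hx : vnormSq x = 1) :
    minFrobCost m x (optimalFamily m lam x r) = backwardErrorSq m lam x r := by
  have hL := (LamNormSq_pos (m := m) lam).ne'
  have hP := (PiMinusSq_pos hm hlam).ne'
  have hnorm : ∀ j, vnormSq (optimalFamily m lam x r j)
      = normSq (lam ^ j) / LamNormSq m lam ^ 2 * vnormSq (r - (x ⬝ᵥ r) • star x)
        + normSq (x ⬝ᵥ r) * normSq (lam ^ j - lam ^ (m - j)) / (4 * PiMinusSq m lam ^ 2) := by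
    intro j
    rw [optimalFamily, vnormSq_add_smul_star hx (by rw [dotProduct_smul, dotProduct_sub_proj hx,
      smul_zero]), vnormSq_smul]
    simp only [normSq_div, normSq_mul, normSq_conj, normSq_ofReal, normSq_ofNat]
    ring
  simp only [minFrobCost, hnorm, dotProduct_optimalFamily hx, sum_add_distrib, ← sum_div,
    ← sum_mul, ← mul_sum, ← LamNormSq_eq_sum_normSq, ← four_mul_PiMinusSq hm, normSq_div,
    normSq_mul, normSq_conj, normSq_ofReal, normSq_ofNat]
  rw [backwardErrorSq_eq hx]
  field_simp
  ring

end Optimum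

section Polynomials

variable {m n : ℕ} {lam : ℂ} {x r : Fin n → ℂ}

lemma evalP_mulVec (Δ : ℕ → Matrix (Fin n) (Fin n) ℂ) (z : ℂ) (x : Fin n → ℂ) :
    evalP m Δ z *ᵥ x = ∑ j ∈ range (m + 1), z ^ j • (Δ j *ᵥ x) := by
  simp only [evalP, sum_mulVec, smul_mulVec]

lemma backwardErrorSq_le_sum_frobNormSq (hm : Odd m) (hlam : lam ≠ 1) (hx : vnormSq x = 1)
    {Δ : ℕ → Matrix (Fin n) (Fin n) ℂ} (hΔ : IsTAntiPalindromic m Δ)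
    (hΔx : evalP m Δ lam *ᵥ x = r) :
    backwardErrorSq m lam x r ≤ ∑ j ∈ range (m + 1), frobNormSq (Δ j) :=
  (backwardErrorSq_le_minFrobCost hm hlam hx (fun _ hj => hΔ.dotProduct_mulVec_reflect hj)
    (by rw [← evalP_mulVec, hΔx])).trans (hΔ.minFrobCost_le hx)

lemma exists_sum_frobNormSq_eq_backwardErrorSq (hm : Odd m) (hlam : lam ≠ 1)
    (hx : vnormSq x = 1) :
    ∃ Δ : ℕ → Matrix (Fin n) (Fin n) ℂ, IsTAntiPalindromic m Δ ∧ evalP m Δ lam *ᵥ x = r ∧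
      ∑ j ∈ range (m + 1), frobNormSq (Δ j) = backwardErrorSq m lam x r := by
  have hp := fun j (hj : j ≤ m) => dotProduct_optimalFamily_reflect (lam := lam) (r := r) hx hj
  refine ⟨minFrobFamily m x (optimalFamily m lam x r), isTAntiPalindromic_minFrobFamily hp, ?_,
    by rw [sum_frobNormSq_minFrobFamily hx hp, minFrobCost_optimalFamily hm hlam hx]⟩
  rw [evalP_mulVec]
  refine (sum_congr rfl fun j hj => ?_).trans (sum_smul_optimalFamily (x := x) hm hlam)
  rw [minFrobFamily_mulVec hx hp (Nat.lt_succ_iff.mp (mem_range.mp hj))]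

end Polynomials

theorem stmt_5_general {m n : ℕ} (hm : Odd m)
    (A : ℕ → Matrix (Fin n) (Fin n) ℂ)
    (lam : ℂ) (hlam : lam ≠ 1)
    (x : Fin n → ℂ) (hx : vnorm x = 1)
    (r : Fin n → ℂ) (hr : r = -(evalP m A lam).mulVec x) :
    etaF_Tapal m A lam x =
      Real.sqrt ((2 / LamNormSq m lam) * vnorm r ^ 2 +
        (1 / PiMinusSq m lam - 2 / LamNormSq m lam) * ‖dotProduct x r‖ ^ 2) := by
  have hx1 : vnormSq x = 1 := by rw [← vnorm_sq, hx, one_pow]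
  have hsolve : ∀ Δ : ℕ → Matrix (Fin n) (Fin n) ℂ,
      evalP m A lam *ᵥ x + evalP m Δ lam *ᵥ x = 0 ↔ evalP m Δ lam *ᵥ x = r := fun Δ => by
    rw [hr, add_eq_zero_iff_eq_neg']
  rw [vnorm_sq, Complex.sq_norm, ← backwardErrorSq]
  refine IsLeast.csInf_eq ⟨?_, ?_⟩
  · obtain ⟨Δ, hΔ, hΔx, hcost⟩ := exists_sum_frobNormSq_eq_backwardErrorSq (r := r) hm hlam hx1
    exact ⟨Δ, hΔ, (hsolve Δ).2 hΔx, by simp only [frobNorm_sq, hcost]⟩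
  · rintro e ⟨Δ, hΔ, hΔx, rfl⟩
    simp only [frobNorm_sq]
    exact Real.sqrt_le_sqrt (backwardErrorSq_le_sum_frobNormSq hm hlam hx1 hΔ ((hsolve Δ).1 hΔx))

/-- Frobenius structured backward error, T-anti-palindromic, m odd, λ ≠ 1. -/
theorem stmt_5 {m n : ℕ} (hm : Odd m) (hn : 0 < n)
    (A : ℕ → Matrix (Fin n) (Fin n) ℂ)
    (hpal : ∀ j ≤ m, A (m - j) = -(A j).transpose)
    (hreg : ∃ z : ℂ, (evalP m A z).det ≠ 0)
    (lam : ℂ) (hlam : lam ≠ 1)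
    (x : Fin n → ℂ) (hx : vnorm x = 1)
    (r : Fin n → ℂ) (hr : r = -(evalP m A lam).mulVec x) :
    etaF_Tapal m A lam x =
      Real.sqrt ((2 / LamNormSq m lam) * vnorm r ^ 2 +
        (1 / PiMinusSq m lam - 2 / LamNormSq m lam) * ‖dotProduct x r‖ ^ 2) :=
  stmt_5_general hm A lam hlam x hx r hr
end
end

section
/- Let m be even, let P be a regular T-palindromic matrix polynomial of degree m with n×n coefficients, let λ ∈ {1, −1}, and let x ∈ ℂⁿ with ‖x‖₂ = 1. Then the spectral-norm structured backward error over the class S_p of T-palindromic polynomials of degree m satisfies η₂^{S_p}(λ, x, P) = ‖P(λ)x‖₂ / √(m+1). -/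
noncomputable section

/-- Spectral-norm structured backward error over T-palindromic polynomials of degree `m`. -/
def eta2_Tpal {n : ℕ} (m : ℕ) (A : ℕ → Matrix (Fin n) (Fin n) ℂ) (lam : ℂ)
    (x : Fin n → ℂ) : ℝ :=
  sInf { e : ℝ | ∃ Δ : ℕ → Matrix (Fin n) (Fin n) ℂ,
    (∀ j ≤ m, Δ (m - j) = (Δ j).transpose) ∧
    (evalP m A lam).mulVec x + (evalP m Δ lam).mulVec x = 0 ∧
    e = Real.sqrt (∑ j ∈ Finset.range (m + 1), specNorm (Δ j) ^ 2) }

/-!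
Since `|λ| = 1`, any admissible `ΔP` satisfies
`‖P(λ)x‖ = ‖ΔP(λ)x‖ ≤ ∑ ‖ΔA_j‖ ≤ √(m+1) |||ΔP|||₂`. The bound is attained by `ΔA_j = λ^j S`,
where `S` is complex symmetric with `S x = -P(λ)x / (m+1)` and `‖S‖₂ ≤ ‖P(λ)x‖ / (m+1)`: this `ΔP`
is T-palindromic because `λ^(m-j) = λ^j` for `m` even and `λ = ±1`, and `ΔP(λ) = (m+1) S`.

Such an `S` exists for every unit `x` and unit target `u`: if `ζ` is the phase of `uᵀx`, the
vectors `s = u + ζ x̄` and `d = u - ζ x̄` are orthogonal, `S = ζ̄ (s sᵀ/‖s‖² - d dᵀ/‖d‖²)` maps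
`x` to `u`, and `‖S y‖² = |sᵀy|²/‖s‖² + |dᵀy|²/‖d‖² ≤ ‖y‖²` by Bessel's inequality for the
orthogonal pair `s̄, d̄`. When `|uᵀx| = 1` we get `d = 0`, and the junk value `0⁻¹ = 0` makes the
second term vanish.
-/

open scoped InnerProductSpace ComplexConjugate Matrix Matrix.Norms.L2Operator
open Matrix WithLp EuclideanSpace

section Norms

variable {ι : Type*} [Fintype ι]

lemma vnorm_eq_norm_toLp (x : ι → ℂ) : vnorm x = ‖toLp 2 x‖ := by
  rw [EuclideanSpace.norm_eq]; rfl

lemma vnorm_nonneg (x : ι → ℂ) : 0 ≤ vnorm x := Real.sqrt_nonneg _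

lemma vnorm_eq_zero {x : ι → ℂ} : vnorm x = 0 ↔ x = 0 := by
  rw [vnorm_eq_norm_toLp, norm_eq_zero, toLp_eq_zero]

lemma vnorm_neg (x : ι → ℂ) : vnorm (-x) = vnorm x := by
  simp [vnorm]

lemma vnorm_star (x : ι → ℂ) : vnorm (star x) = vnorm x := by
  simp [vnorm]

lemma vnorm_smul (c : ℂ) (x : ι → ℂ) : vnorm (c • x) = ‖c‖ * vnorm x := by
  simp only [vnorm_eq_norm_toLp, toLp_smul, norm_smul]

variable [DecidableEq ι]

lemma specNorm_eq_norm (A : Matrix ι ι ℂ) : specNorm A = ‖A‖ := rfl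

lemma specNorm_nonneg (A : Matrix ι ι ℂ) : 0 ≤ specNorm A := norm_nonneg _

lemma vnorm_mulVec_le (A : Matrix ι ι ℂ) (x : ι → ℂ) :
    vnorm (A *ᵥ x) ≤ specNorm A * vnorm x := by
  rw [vnorm_eq_norm_toLp, vnorm_eq_norm_toLp, ← toEuclideanCLM_toLp]
  exact (toEuclideanCLM (𝕜 := ℂ) A).le_opNorm _

lemma specNorm_le_of_vnorm_mulVec_le {A : Matrix ι ι ℂ} {C : ℝ} (hC : 0 ≤ C)
    (h : ∀ y, vnorm (A *ᵥ y) ≤ C * vnorm y) : specNorm A ≤ C :=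
  ContinuousLinearMap.opNorm_le_bound _ hC fun y => by
    simpa [vnorm_eq_norm_toLp, ← toEuclideanCLM_toLp] using h (ofLp y)

lemma specNorm_smul (c : ℂ) (A : Matrix ι ι ℂ) : specNorm (c • A) = ‖c‖ * specNorm A :=
  norm_smul c A

end Norms

section Bessel

variable {E : Type*} [NormedAddCommGroup E] [InnerProductSpace ℂ E]

lemma norm_inner_sq_div_le (a y : E) : ‖⟪a, y⟫_ℂ‖ ^ 2 / ‖a‖ ^ 2 ≤ ‖y‖ ^ 2 :=
  div_le_of_le_mul₀ (sq_nonneg _) (sq_nonneg _) <| by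
    rw [← mul_pow, mul_comm]; gcongr; exact norm_inner_le_norm a y

lemma ofReal_norm_sq_eq_inner_self (v : E) : ((‖v‖ ^ 2 : ℝ) : ℂ) = ⟪v, v⟫_ℂ := by
  exact_mod_cast (inner_self_eq_norm_sq_to_K v).symm

lemma norm_div_norm_sq_smul_sq (z : ℂ) (a : E) :
    ‖(z / ((‖a‖ ^ 2 : ℝ) : ℂ)) • a‖ ^ 2 = ‖z‖ ^ 2 / ‖a‖ ^ 2 := by
  rcases eq_or_ne a 0 with rfl | ha
  · simp
  have : ‖a‖ ≠ 0 := norm_ne_zero_iff.mpr ha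
  rw [norm_smul, norm_div, Complex.norm_real, Real.norm_of_nonneg (by positivity)]
  field_simp

lemma norm_starProjection_singleton_sq (a y : E) :
    ‖(ℂ ∙ a).starProjection y‖ ^ 2 = ‖⟪a, y⟫_ℂ‖ ^ 2 / ‖a‖ ^ 2 := by
  rw [Submodule.starProjection_singleton]
  exact norm_div_norm_sq_smul_sq _ a

lemma norm_inner_sq_div_add_le_of_inner_eq_zero {a b : E} (hab : ⟪a, b⟫_ℂ = 0) (y : E) :
    ‖⟪a, y⟫_ℂ‖ ^ 2 / ‖a‖ ^ 2 + ‖⟪b, y⟫_ℂ‖ ^ 2 / ‖b‖ ^ 2 ≤ ‖y‖ ^ 2 := by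
  set K := ℂ ∙ a
  have hb : ⟪b, y⟫_ℂ = ⟪b, Kᗮ.starProjection y⟫_ℂ := by
    have hbK : b ∈ Kᗮ := Submodule.mem_orthogonal_singleton_iff_inner_right.mpr hab
    conv_lhs => rw [← K.starProjection_add_starProjection_orthogonal y]
    rw [inner_add_right,
      Submodule.inner_left_of_mem_orthogonal (K.starProjection_apply_mem y) hbK, zero_add]
  calc _ = ‖K.starProjection y‖ ^ 2 + ‖⟪b, Kᗮ.starProjection y⟫_ℂ‖ ^ 2 / ‖b‖ ^ 2 := by
        rw [norm_starProjection_singleton_sq, hb]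
    _ ≤ ‖K.starProjection y‖ ^ 2 + ‖Kᗮ.starProjection y‖ ^ 2 := by
        gcongr; exact norm_inner_sq_div_le _ _
    _ = ‖y‖ ^ 2 := (K.norm_sq_eq_add_norm_sq_projection y).symm

lemma inner_add_smul_sub_smul_eq_zero {a b : E} {ζ : ℂ} {r : ℝ} (ha : ⟪a, a⟫_ℂ = 1)
    (hb : ⟪b, b⟫_ℂ = 1) (hζ : conj ζ * ζ = 1) (hab : ⟪a, b⟫_ℂ = r * conj ζ) :
    ⟪a + ζ • b, a - ζ • b⟫_ℂ = 0 := by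
  have hba : ⟪b, a⟫_ℂ = r * ζ := by rw [← inner_conj_symm, hab]; simp
  simp only [inner_add_left, inner_sub_right, inner_smul_left, inner_smul_right, ha, hb, hab, hba]
  linear_combination -hζ

lemma ofReal_norm_add_smul_sq {a b : E} {ζ : ℂ} {r : ℝ} (ha : ⟪a, a⟫_ℂ = 1)
    (hb : ⟪b, b⟫_ℂ = 1) (hζ : conj ζ * ζ = 1) (hab : ⟪a, b⟫_ℂ = r * conj ζ) :
    ((‖a + ζ • b‖ ^ 2 : ℝ) : ℂ) = 2 * (1 + r) := by
  have hba : ⟪b, a⟫_ℂ = r * ζ := by rw [← inner_conj_symm, hab]; simp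
  simp only [ofReal_norm_sq_eq_inner_self, inner_add_left, inner_add_right, inner_smul_left,
    inner_smul_right, ha, hb, hab, hba]
  linear_combination (1 + 2 * r) * hζ

lemma ofReal_norm_sub_smul_sq {a b : E} {ζ : ℂ} {r : ℝ} (ha : ⟪a, a⟫_ℂ = 1)
    (hb : ⟪b, b⟫_ℂ = 1) (hζ : conj ζ * ζ = 1) (hab : ⟪a, b⟫_ℂ = r * conj ζ) :
    ((‖a - ζ • b‖ ^ 2 : ℝ) : ℂ) = 2 * (1 - r) := by
  have hba : ⟪b, a⟫_ℂ = r * ζ := by rw [← inner_conj_symm, hab]; simp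
  simp only [ofReal_norm_sq_eq_inner_self, inner_sub_left, inner_sub_right, inner_smul_left,
    inner_smul_right, ha, hb, hab, hba]
  linear_combination (1 - 2 * r) * hζ

end Bessel

section SymmetricMapping

variable {ι : Type*} [Fintype ι]

def symmRankOne (s : ι → ℂ) : Matrix ι ι ℂ := ((vnorm s ^ 2 : ℝ) : ℂ)⁻¹ • vecMulVec s s

lemma isSymm_symmRankOne (s : ι → ℂ) : (symmRankOne s).IsSymm := by
  simp [symmRankOne, IsSymm]

lemma symmRankOne_mulVec (s y : ι → ℂ) :
    symmRankOne s *ᵥ y = ((s ⬝ᵥ y) / ((vnorm s ^ 2 : ℝ) : ℂ)) • s := by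
  rw [symmRankOne, smul_mulVec, vecMulVec_mulVec, op_smul_eq_smul, smul_smul, inv_mul_eq_div]

lemma symmRankOne_mulVec_eq_smul {s x : ι → ℂ} {α : ℂ}
    (h : s ⬝ᵥ x = α * ((vnorm s ^ 2 : ℝ) : ℂ)) : symmRankOne s *ᵥ x = α • s := by
  rcases eq_or_ne s 0 with rfl | hs
  · simp [symmRankOne]
  have : ((vnorm s ^ 2 : ℝ) : ℂ) ≠ 0 := by exact_mod_cast pow_ne_zero 2 (mt vnorm_eq_zero.mp hs)
  rw [symmRankOne_mulVec, h, mul_div_cancel_right₀ _ this]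

variable [DecidableEq ι]

lemma specNorm_symmRankOne_sub_le_one {s d : ι → ℂ} (hsd : ⟪toLp 2 s, toLp 2 d⟫_ℂ = 0) :
    specNorm (symmRankOne s - symmRankOne d) ≤ 1 := by
  refine specNorm_le_of_vnorm_mulVec_le zero_le_one fun y => ?_
  have hdot : ∀ v : ι → ℂ, v ⬝ᵥ y = ⟪toLp 2 (star v), toLp 2 y⟫_ℂ := fun v => by
    rw [inner_toLp_toLp, star_star, dotProduct_comm]
  have hstar : ∀ v : ι → ℂ, ‖toLp 2 (star v)‖ = ‖toLp 2 v‖ := fun v => by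
    rw [← vnorm_eq_norm_toLp, ← vnorm_eq_norm_toLp, vnorm_star]
  have horth : ⟪toLp 2 (star s), toLp 2 (star d)⟫_ℂ = 0 := by
    rw [inner_toLp_toLp, star_star, dotProduct_comm, ← inner_toLp_toLp, inner_eq_zero_symm.mp hsd]
  have hbessel := norm_inner_sq_div_add_le_of_inner_eq_zero horth (toLp 2 y)
  rw [hstar, hstar, ← hdot, ← hdot] at hbessel
  rw [one_mul, sub_mulVec, symmRankOne_mulVec, symmRankOne_mulVec]
  simp only [vnorm_eq_norm_toLp, toLp_sub, toLp_smul] at hbessel ⊢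
  rw [← pow_le_pow_iff_left₀ (norm_nonneg _) (norm_nonneg _) two_ne_zero,
    norm_sub_sq (𝕜 := ℂ), inner_smul_left, inner_smul_right, hsd, mul_zero, mul_zero,
    map_zero, mul_zero, sub_zero, norm_div_norm_sq_smul_sq, norm_div_norm_sq_smul_sq]
  exact hbessel

lemma exists_isSymm_mulVec_eq_of_vnorm_eq_one {x u : ι → ℂ} (hx : vnorm x = 1)
    (hu : vnorm u = 1) : ∃ S : Matrix ι ι ℂ, S.IsSymm ∧ S *ᵥ x = u ∧ specNorm S ≤ 1 := by
  set r := ‖u ⬝ᵥ x‖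
  set ζ := Complex.exp ((u ⬝ᵥ x).arg * Complex.I)
  have hζ : conj ζ * ζ = 1 := by
    rw [Complex.conj_mul', Complex.norm_exp_ofReal_mul_I]; simp
  have hc : u ⬝ᵥ x = r * ζ := (Complex.norm_mul_exp_arg_mul_I _).symm
  set s := u + ζ • star x
  set d := u - ζ • star x
  have huu : ⟪toLp 2 u, toLp 2 u⟫_ℂ = 1 := by
    rw [← ofReal_norm_sq_eq_inner_self, ← vnorm_eq_norm_toLp, hu]; simp
  have hXX : ⟪toLp 2 (star x), toLp 2 (star x)⟫_ℂ = 1 := by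
    rw [← ofReal_norm_sq_eq_inner_self, ← vnorm_eq_norm_toLp, vnorm_star, hx]; simp
  have huX : ⟪toLp 2 u, toLp 2 (star x)⟫_ℂ = r * conj ζ := by
    rw [inner_toLp_toLp, star_dotProduct_star, hc]; simp
  have hxx : star x ⬝ᵥ x = 1 := by
    rw [dotProduct_comm, ← inner_toLp_toLp, ← ofReal_norm_sq_eq_inner_self,
      ← vnorm_eq_norm_toLp, hx]
    simp
  have hsd : ⟪toLp 2 s, toLp 2 d⟫_ℂ = 0 := by
    simpa [s, d] using inner_add_smul_sub_smul_eq_zero huu hXX hζ huX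
  have hs : ((vnorm s ^ 2 : ℝ) : ℂ) = 2 * (1 + r) := by
    simpa [s, vnorm_eq_norm_toLp] using ofReal_norm_add_smul_sq huu hXX hζ huX
  have hd : ((vnorm d ^ 2 : ℝ) : ℂ) = 2 * (1 - r) := by
    simpa [d, vnorm_eq_norm_toLp] using ofReal_norm_sub_smul_sq huu hXX hζ huX
  have hsx : symmRankOne s *ᵥ x = (ζ / 2) • s := by
    refine symmRankOne_mulVec_eq_smul ?_
    rw [hs, add_dotProduct, smul_dotProduct, hxx, hc]
    ring
  have hdx : symmRankOne d *ᵥ x = -(ζ / 2) • d := by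
    refine symmRankOne_mulVec_eq_smul ?_
    rw [hd, sub_dotProduct, smul_dotProduct, hxx, hc]
    ring
  refine ⟨conj ζ • (symmRankOne s - symmRankOne d),
    ((isSymm_symmRankOne s).sub (isSymm_symmRankOne d)).smul _, ?_, ?_⟩
  · rw [smul_mulVec, sub_mulVec, hsx, hdx]
    ext i
    simp only [s, d, Pi.smul_apply, Pi.sub_apply, Pi.add_apply, smul_eq_mul]
    linear_combination u i * hζ
  · rw [specNorm_smul, Complex.norm_conj, Complex.norm_exp_ofReal_mul_I, one_mul]
    exact specNorm_symmRankOne_sub_le_one hsd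

lemma exists_isSymm_mulVec_eq {x : ι → ℂ} (hx : vnorm x = 1) (v : ι → ℂ) :
    ∃ S : Matrix ι ι ℂ, S.IsSymm ∧ S *ᵥ x = v ∧ specNorm S ≤ vnorm v := by
  rcases eq_or_ne v 0 with rfl | hv
  · exact ⟨0, by simp [IsSymm], by simp, by simp [specNorm_eq_norm, vnorm]⟩
  have hν : (vnorm v : ℂ) ≠ 0 := by exact_mod_cast mt vnorm_eq_zero.mp hv
  obtain ⟨S, hS, hSx, hSn⟩ := exists_isSymm_mulVec_eq_of_vnorm_eq_one hx
    (u := (vnorm v : ℂ)⁻¹ • v) (by rw [vnorm_smul, norm_inv, Complex.norm_real,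
      Real.norm_of_nonneg (vnorm_nonneg v), inv_mul_cancel₀ (by exact_mod_cast hν)])
  refine ⟨(vnorm v : ℂ) • S, hS.smul _, ?_, ?_⟩
  · rw [smul_mulVec, hSx, smul_smul, mul_inv_cancel₀ hν, one_smul]
  · rw [specNorm_smul, Complex.norm_real, Real.norm_of_nonneg (vnorm_nonneg v)]
    exact mul_le_of_le_one_right (vnorm_nonneg v) hSn

end SymmetricMapping

lemma pow_sub_eq_pow_of_sq_eq_one {M : Type*} [Monoid M] {a : M} (ha : a ^ 2 = 1) {m j : ℕ}
    (hm : Even m) (hj : j ≤ m) : a ^ (m - j) = a ^ j := by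
  obtain ⟨k, rfl⟩ := hm
  calc a ^ (k + k - j) = a ^ (k + k - j) * (a ^ 2) ^ j := by rw [ha, one_pow, mul_one]
    _ = (a ^ 2) ^ k * a ^ j := by rw [← pow_mul, ← pow_add, ← pow_mul, ← pow_add]; congr 1; omega
    _ = a ^ j := by rw [ha, one_pow, one_mul]

section MatrixPolynomial

variable {n m : ℕ}

lemma specNorm_evalP_le {lam : ℂ} (hlam : ‖lam‖ = 1) (Δ : ℕ → Matrix (Fin n) (Fin n) ℂ) :
    specNorm (evalP m Δ lam) ≤ ∑ j ∈ Finset.range (m + 1), specNorm (Δ j) := by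
  simp only [specNorm_eq_norm, evalP]
  refine (norm_sum_le _ _).trans_eq (Finset.sum_congr rfl fun j _ => ?_)
  rw [norm_smul, norm_pow, hlam, one_pow, one_mul]

lemma vnorm_evalP_mulVec_le {lam : ℂ} (hlam : ‖lam‖ = 1) {x : Fin n → ℂ} (hx : vnorm x = 1)
    (Δ : ℕ → Matrix (Fin n) (Fin n) ℂ) :
    vnorm (evalP m Δ lam *ᵥ x) ≤
      √((m : ℝ) + 1) * √(∑ j ∈ Finset.range (m + 1), specNorm (Δ j) ^ 2) :=
  calc vnorm (evalP m Δ lam *ᵥ x) ≤ specNorm (evalP m Δ lam) := by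
        simpa [hx] using vnorm_mulVec_le (evalP m Δ lam) x
    _ ≤ ∑ j ∈ Finset.range (m + 1), specNorm (Δ j) := specNorm_evalP_le hlam Δ
    _ ≤ _ := by
        rw [← Real.sqrt_mul (by positivity)]
        apply Real.le_sqrt_of_sq_le
        simpa using sq_sum_le_card_mul_sum_sq (s := Finset.range (m + 1))
          (f := fun j => specNorm (Δ j))

lemma evalP_pow_smul {lam : ℂ} (hlam : lam ^ 2 = 1) (S : Matrix (Fin n) (Fin n) ℂ) :
    evalP m (fun j => lam ^ j • S) lam = ((m : ℂ) + 1) • S := by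
  have h : ∀ j : ℕ, lam ^ j * lam ^ j = 1 := fun j => by rw [← mul_pow, ← sq, hlam, one_pow]
  simp only [evalP, smul_smul, h, one_smul, Finset.sum_const, Finset.card_range]
  rw [← Nat.cast_smul_eq_nsmul ℂ]
  push_cast; rfl

lemma sqrt_sum_specNorm_pow_smul_sq {lam : ℂ} (hlam : ‖lam‖ = 1)
    (S : Matrix (Fin n) (Fin n) ℂ) :
    √(∑ j ∈ Finset.range (m + 1), specNorm (lam ^ j • S) ^ 2) = √((m : ℝ) + 1) * specNorm S := by
  simp only [specNorm_smul, norm_pow, hlam, one_pow, one_mul, Finset.sum_const,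
    Finset.card_range, nsmul_eq_mul]
  push_cast
  rw [Real.sqrt_mul (by positivity), Real.sqrt_sq (specNorm_nonneg S)]

lemma exists_tPalindromic_evalP_mulVec_eq (hm : Even m) {lam : ℂ} (hlam : lam ^ 2 = 1)
    {x : Fin n → ℂ} (hx : vnorm x = 1) (v : Fin n → ℂ) :
    ∃ Δ : ℕ → Matrix (Fin n) (Fin n) ℂ, (∀ j ≤ m, Δ (m - j) = (Δ j)ᵀ) ∧
      evalP m Δ lam *ᵥ x = v ∧
      √(∑ j ∈ Finset.range (m + 1), specNorm (Δ j) ^ 2) ≤ vnorm v / √((m : ℝ) + 1) := by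
  obtain ⟨S, hS, hSx, hSn⟩ := exists_isSymm_mulVec_eq hx (((m : ℂ) + 1)⁻¹ • v)
  have hm1 : (0 : ℝ) < m + 1 := by positivity
  have hnorm : ‖(m : ℂ) + 1‖ = (m : ℝ) + 1 := by exact_mod_cast Complex.norm_natCast (m + 1)
  refine ⟨fun j => lam ^ j • S, fun j hj => ?_, ?_, ?_⟩
  · change lam ^ (m - j) • S = (lam ^ j • S)ᵀ
    rw [transpose_smul, hS.eq, pow_sub_eq_pow_of_sq_eq_one hlam hm hj]
  · rw [evalP_pow_smul hlam, smul_mulVec, hSx, smul_smul, mul_inv_cancel₀ (by norm_cast),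
      one_smul]
  · rw [vnorm_smul, norm_inv, hnorm] at hSn
    rw [sqrt_sum_specNorm_pow_smul_sq (Complex.norm_eq_one_of_pow_eq_one hlam two_ne_zero),
      le_div_iff₀ (Real.sqrt_pos.2 hm1), mul_right_comm, Real.mul_self_sqrt hm1.le,
      ← le_inv_mul_iff₀ hm1]
    exact hSn

end MatrixPolynomial

theorem stmt_10_general {m n : ℕ} (hm : Even m)
    (A : ℕ → Matrix (Fin n) (Fin n) ℂ)
    (lam : ℂ) (hlam : lam = 1 ∨ lam = -1)
    (x : Fin n → ℂ) (hx : vnorm x = 1) :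
    eta2_Tpal m A lam x =
      vnorm ((evalP m A lam).mulVec x) / Real.sqrt ((m : ℝ) + 1) := by
  have hlam2 : lam ^ 2 = 1 := by rcases hlam with rfl | rfl <;> norm_num
  set r := evalP m A lam *ᵥ x
  have lower : ∀ Δ, r + evalP m Δ lam *ᵥ x = 0 →
      vnorm r / √((m : ℝ) + 1) ≤ √(∑ j ∈ Finset.range (m + 1), specNorm (Δ j) ^ 2) := by
    intro Δ hΔ
    rw [div_le_iff₀' (by positivity), eq_neg_of_add_eq_zero_left hΔ, vnorm_neg]
    exact vnorm_evalP_mulVec_le (Complex.norm_eq_one_of_pow_eq_one hlam2 two_ne_zero) hx Δ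
  obtain ⟨Δ, hpal, hΔx, hΔn⟩ := exists_tPalindromic_evalP_mulVec_eq hm hlam2 hx (-r)
  have hΔ : r + evalP m Δ lam *ᵥ x = 0 := by rw [hΔx, add_neg_cancel]
  rw [vnorm_neg] at hΔn
  exact IsLeast.csInf_eq ⟨⟨Δ, hpal, hΔ, le_antisymm (lower Δ hΔ) hΔn⟩,
    fun e ⟨Δ', _, hΔ', he⟩ => he ▸ lower Δ' hΔ'⟩

/-- spectral-norm structured backward error, T-palindromic, m even, λ = ±1. -/
theorem stmt_10 {m n : ℕ} (hm : Even m) (hm0 : 0 < m) (hn : 0 < n)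
    (A : ℕ → Matrix (Fin n) (Fin n) ℂ)
    (hpal : ∀ j ≤ m, A (m - j) = (A j).transpose)
    (hreg : ∃ z : ℂ, (evalP m A z).det ≠ 0)
    (lam : ℂ) (hlam : lam = 1 ∨ lam = -1)
    (x : Fin n → ℂ) (hx : vnorm x = 1) :
    eta2_Tpal m A lam x =
      vnorm ((evalP m A lam).mulVec x) / Real.sqrt ((m : ℝ) + 1) :=
  stmt_10_general hm A lam hlam x hx
end
end
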